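/- In the case k = 2, d = 1 of the Rasch Poisson counts model, the determinant of the Fisher information matrix equals the elementary symmetric polynomial of degree three in the four products u_x := w_x λ(x), x ∈ {0,1}²: det M(w, β) = e₃(u_{00}, u_{01}, u_{10}, u_{11}). -/

import Mathlib

/-!
Written as `Fᵀ diag(u) F` with the `4 × 3` design matrix `F` of rows `(1, a, b)`, the information
matrix has, by Cauchy–Binet, determinant `∑_S (∏_{x ∈ S} u_x) det(F_S)²` over the 3-element sets
`S` of design points; each `F_S` is unimodular, whence `e₃`.
-/

open Matrix

section InformationMatrix

variable {R : Type*} [CommRing R]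

def raschRegressor (a b : Bool) : Fin 3 → R :=
  ![1, if a then 1 else 0, if b then 1 else 0]

theorem sum_smul_vecMulVec_raschRegressor (u : Bool → Bool → R) :
    ∑ x : Bool × Bool, u x.1 x.2 • vecMulVec (raschRegressor x.1 x.2) (raschRegressor x.1 x.2) =
      !![u false false + u false true + u true false + u true true,
          u true false + u true true, u false true + u true true;
        u true false + u true true, u true false + u true true, u true true;
        u false true + u true true, u true true, u false true + u true true] := by
  ext i j
  fin_cases i <;> fin_cases j <;>
    simp [Fintype.sum_prod_type, raschRegressor, vecMulVec, Matrix.sum_apply] <;> ring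

theorem det_raschInformation (u : Bool → Bool → R) :
    det !![u false false + u false true + u true false + u true true,
          u true false + u true true, u false true + u true true;
        u true false + u true true, u true false + u true true, u true true;
        u false true + u true true, u true true, u false true + u true true] =
      u false false * u false true * u true false
        + u false false * u false true * u true true
        + u false false * u true false * u true true
        + u false true * u true false * u true true := by
  rw [det_fin_three]
  simp only [of_apply, cons_val', cons_val_zero, cons_val_one, cons_val_two, empty_val',
    cons_val_fin_one, head_cons, tail_cons, head_fin_const]
  ring

end InformationMatrix

theorem det_information_matrix_k2_d1_general
    (f : Bool → Bool → Fin 3 → ℝ)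
    (hf : ∀ a b, f a b = ![1, if a then 1 else 0, if b then 1 else 0])
    (u : Bool → Bool → ℝ)
    (M : Matrix (Fin 3) (Fin 3) ℝ)
    (hM : M = ∑ x : Bool × Bool, u x.1 x.2 • vecMulVec (f x.1 x.2) (f x.1 x.2)) :
    M.det = u false false * u false true * u true false
      + u false false * u false true * u true true
      + u false false * u true false * u true true
      + u false true * u true false * u true true := by
  obtain rfl : f = raschRegressor := funext₂ hf
  rw [hM, sum_smul_vecMulVec_raschRegressor, det_raschInformation]

/-- For `k = 2`, `d = 1`, the determinant of the Fisher information matrix is the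
elementary symmetric polynomial of degree three in the products `u_x = w_x λ(x)`. -/
theorem det_information_matrix_k2_d1 (β₀ β₁ β₂ : ℝ) (w : Bool → Bool → ℝ)
    (lam : Bool → Bool → ℝ)
    (hlam : ∀ a b, lam a b =
      Real.exp (β₀ + (if a then β₁ else 0) + (if b then β₂ else 0)))
    (f : Bool → Bool → Fin 3 → ℝ)
    (hf : ∀ a b, f a b = ![1, if a then 1 else 0, if b then 1 else 0])
    (u : Bool → Bool → ℝ) (hu : ∀ a b, u a b = w a b * lam a b)
    (M : Matrix (Fin 3) (Fin 3) ℝ)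
    (hM : M = ∑ x : Bool × Bool, u x.1 x.2 • vecMulVec (f x.1 x.2) (f x.1 x.2)) :
    M.det = u false false * u false true * u true false
      + u false false * u false true * u true true
      + u false false * u true false * u true true
      + u false true * u true false * u true true :=
  det_information_matrix_k2_d1_general f hf u M hM
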